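/- Let ξ_1, …, ξ_l be i.i.d. standard Gaussians and σ_1², …, σ_l² ≥ 0. Then for every t ≥ 0, P(Σ_{j=1}^l σ_j²·ξ_j² > Σ_j σ_j² + 2·√(t·Σ_j σ_j⁴) + 2·t·max_j σ_j²) ≤ exp(−t). -/

import Mathlib

/-!
Chernoff's method. For `0 ≤ θ` with `2θ max_j s_j < 1`, the summand `s_j ξ_j²` has moment
generating function `(1 - 2θ s_j)^{-1/2}` at `θ`, and `-log (1 - u) ≤ u + u² / (2 (1 - u))`
bounds it by `exp (θ s_j + θ² s_j² / (1 - 2θ max_j s_j))`. Independence multiplies these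
bounds, and the choice `θ = √t / (√(Σ s_j²) + 2 √t max_j s_j)` turns the Chernoff exponent
into exactly `-t`.
-/

open Real MeasureTheory ProbabilityTheory Finset

theorem Real.neg_log_one_sub_le {u : ℝ} (hu₀ : 0 ≤ u) (hu₁ : u < 1) :
    -log (1 - u) ≤ u + u ^ 2 / (2 * (1 - u)) := by
  have hlog := (hasSum_nat_add_iff' 1).mpr
    (hasSum_pow_div_log_of_abs_lt_one (abs_lt.mpr ⟨by linarith, hu₁⟩))
  simp only [sum_range_one, Nat.cast_add, Nat.cast_one, Nat.cast_zero, zero_add, pow_one,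
    div_one] at hlog
  have hgeom : HasSum (fun n : ℕ => u ^ 2 / 2 * u ^ n) (u ^ 2 / (2 * (1 - u))) := by
    have := (hasSum_geometric_of_lt_one hu₀ hu₁).mul_left (u ^ 2 / 2)
    rwa [← div_eq_mul_inv, div_div] at this
  have hle := hasSum_le (fun n => ?_) hlog hgeom
  · linarith
  · calc u ^ (n + 1 + 1) / (n + 1 + 1) ≤ u ^ (n + 1 + 1) / 2 := by
          gcongr; linarith [n.cast_nonneg (α := ℝ)]
      _ = u ^ 2 / 2 * u ^ n := by ring

theorem Real.inv_sqrt_one_sub_two_mul_le_exp {c m : ℝ} (hc : 0 ≤ c) (hcm : c ≤ m)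
    (hm : 2 * m < 1) : (√(1 - 2 * c))⁻¹ ≤ exp (c + c ^ 2 / (1 - 2 * m)) := by
  have h₁ : 0 < 1 - 2 * c := by linarith
  have hlog := neg_log_one_sub_le (u := 2 * c) (by positivity) (by linarith)
  have hmono : (2 * c) ^ 2 / (2 * (1 - 2 * c)) ≤ (2 * c) ^ 2 / (2 * (1 - 2 * m)) := by
    gcongr
  rw [← exp_log (inv_pos.mpr (sqrt_pos.mpr h₁)), log_inv, log_sqrt h₁.le, exp_le_exp]
  have : (2 * c) ^ 2 / (2 * (1 - 2 * m)) = 2 * (c ^ 2 / (1 - 2 * m)) := by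
    field_simp
  linarith

theorem integral_exp_mul_sq_gaussianReal {a : ℝ} (ha : 2 * a < 1) :
    ∫ x, exp (a * x ^ 2) ∂gaussianReal 0 1 = (√(1 - 2 * a))⁻¹ := by
  have hpdf : ∀ x, gaussianPDFReal 0 1 x • exp (a * x ^ 2)
      = (√(2 * π))⁻¹ * exp (-(1 / 2 - a) * x ^ 2) := fun x => by
    simp only [gaussianPDFReal, NNReal.coe_one, mul_one, sub_zero, smul_eq_mul, mul_assoc,
      ← exp_add]
    ring_nf
  simp_rw [integral_gaussianReal_eq_integral_smul one_ne_zero, hpdf, integral_const_mul,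
    integral_gaussian]
  rw [show 1 - 2 * a = 2 * (1 / 2 - a) by ring, sqrt_div pi_pos.le, sqrt_mul zero_le_two,
    sqrt_mul zero_le_two]
  have : 0 < √(1 / 2 - a) := sqrt_pos.mpr (by linarith)
  field_simp

section SquaredGaussian

variable {Ω : Type*} [MeasurableSpace Ω] {μ : Measure Ω} {X : Ω → ℝ}

theorem mgf_mul_sq_of_map_eq_gaussianReal (hX : Measurable X)
    (hXμ : μ.map X = gaussianReal 0 1) {c t : ℝ} (h : 2 * (t * c) < 1) :
    mgf (fun ω => c * X ω ^ 2) μ t = (√(1 - 2 * (t * c)))⁻¹ := by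
  rw [mgf, ← integral_exp_mul_sq_gaussianReal h, ← hXμ,
    integral_map hX.aemeasurable (by fun_prop)]
  simp only [mul_assoc]

theorem integrable_exp_mul_mul_sq_of_map_eq_gaussianReal (hX : Measurable X)
    (hXμ : μ.map X = gaussianReal 0 1) {c t : ℝ} (h : 2 * (t * c) < 1) :
    Integrable (fun ω => exp (t * (c * X ω ^ 2))) μ := by
  refine Integrable.of_integral_ne_zero ?_
  rw [← mgf, mgf_mul_sq_of_map_eq_gaussianReal hX hXμ h]
  exact (inv_pos.mpr (sqrt_pos.mpr (by linarith))).ne'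

end SquaredGaussian

theorem exists_chernoff_parameter {t v b : ℝ} (ht : 0 ≤ t) (hv : 0 < v) (hb : 0 ≤ b) :
    ∃ θ, 0 ≤ θ ∧ 2 * θ * b < 1 ∧
      θ ^ 2 * v / (1 - 2 * θ * b) - θ * (2 * √(t * v) + 2 * t * b) = -t := by
  obtain ⟨x, hx, rfl⟩ : ∃ x, 0 ≤ x ∧ t = x ^ 2 := ⟨√t, sqrt_nonneg t, (sq_sqrt ht).symm⟩
  obtain ⟨y, hy, rfl⟩ : ∃ y, 0 < y ∧ v = y ^ 2 := ⟨√v, sqrt_pos.mpr hv, (sq_sqrt hv.le).symm⟩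
  have hD : 0 < y + 2 * b * x := by positivity
  have h₁ : 1 - 2 * (x / (y + 2 * b * x)) * b = y / (y + 2 * b * x) := by
    field_simp; ring
  refine ⟨x / (y + 2 * b * x), by positivity, ?_, ?_⟩
  · rw [← sub_pos, h₁]; positivity
  · rw [h₁, sqrt_mul (sq_nonneg x), sqrt_sq hx, sqrt_sq hy.le]
    field_simp
    ring

theorem measureReal_sum_mul_sq_ge_le {Ω ι : Type*} [MeasurableSpace Ω] [Fintype ι]
    {μ : Measure Ω} [IsProbabilityMeasure μ] {ξ : ι → Ω → ℝ} (hmeas : ∀ j, Measurable (ξ j))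
    (hgauss : ∀ j, μ.map (ξ j) = gaussianReal 0 1) (hindep : iIndepFun ξ μ) {s : ι → ℝ}
    (hs : ∀ j, 0 ≤ s j) {b θ : ℝ} (hsb : ∀ j, s j ≤ b) (hθ : 0 ≤ θ) (hθb : 2 * θ * b < 1)
    (ε : ℝ) :
    μ.real {ω | ε ≤ ∑ j, s j * ξ j ω ^ 2}
      ≤ exp (θ * (∑ j, s j) + θ ^ 2 * (∑ j, s j ^ 2) / (1 - 2 * θ * b) - θ * ε) := by
  set Y : ι → Ω → ℝ := fun j ω => s j * ξ j ω ^ 2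
  have hYmeas : ∀ j, Measurable (Y j) := fun j => by fun_prop
  have hYindep : iIndepFun Y μ := hindep.comp (fun j x => s j * x ^ 2) (by fun_prop)
  have hθs : ∀ j, 2 * (θ * s j) < 1 := fun j => by nlinarith [hsb j]
  have hcher := measure_ge_le_exp_mul_mgf (X := ∑ j, Y j) ε hθ
    (hYindep.integrable_exp_mul_sum hYmeas fun j _ =>
      integrable_exp_mul_mul_sq_of_map_eq_gaussianReal (hmeas j) (hgauss j) (hθs j))
  rw [hYindep.mgf_sum hYmeas] at hcher
  have hprod :
      ∏ j, mgf (Y j) μ θ ≤ exp (θ * (∑ j, s j) + θ ^ 2 * (∑ j, s j ^ 2) / (1 - 2 * θ * b)) :=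
    calc ∏ j, mgf (Y j) μ θ
        = ∏ j, (√(1 - 2 * (θ * s j)))⁻¹ :=
          prod_congr rfl fun j _ => mgf_mul_sq_of_map_eq_gaussianReal (hmeas j) (hgauss j) (hθs j)
      _ ≤ ∏ j, exp (θ * s j + (θ * s j) ^ 2 / (1 - 2 * (θ * b))) :=
          prod_le_prod (fun j _ => by positivity) fun j _ =>
            inv_sqrt_one_sub_two_mul_le_exp (mul_nonneg hθ (hs j))
              (mul_le_mul_of_nonneg_left (hsb j) hθ) (by linarith)
      _ = exp (θ * (∑ j, s j) + θ ^ 2 * (∑ j, s j ^ 2) / (1 - 2 * θ * b)) := by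
          rw [← exp_sum, sum_add_distrib, mul_sum, mul_sum, sum_div]
          simp_rw [mul_pow, mul_assoc]
  calc μ.real {ω | ε ≤ ∑ j, s j * ξ j ω ^ 2} = μ.real {ω | ε ≤ (∑ j, Y j) ω} := by
        simp only [Y, Finset.sum_apply]
    _ ≤ exp (-θ * ε) * exp (θ * (∑ j, s j) + θ ^ 2 * (∑ j, s j ^ 2) / (1 - 2 * θ * b)) :=
        hcher.trans (by gcongr)
    _ = _ := by rw [← exp_add]; congr 1; ring

theorem stmt_6_general {Ω : Type*} [MeasurableSpace Ω] (μ : Measure Ω) [IsProbabilityMeasure μ]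
    (l : ℕ) (ξ : Fin l → Ω → ℝ)
    (hmeas : ∀ j, Measurable (ξ j))
    (hgauss : ∀ j, Measure.map (ξ j) μ = gaussianReal 0 1)
    (hindep : iIndepFun ξ μ)
    (s : Fin l → ℝ) (hs : ∀ j, 0 ≤ s j) (t : ℝ) (ht : 0 ≤ t) :
    μ {ω | (∑ j, s j) + 2 * Real.sqrt (t * ∑ j, (s j) ^ 2) + 2 * t * (⨆ j, s j)
        < ∑ j, s j * (ξ j ω) ^ 2}
      ≤ ENNReal.ofReal (Real.exp (-t)) := by
  set b := ⨆ j, s j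
  have hsb : ∀ j, s j ≤ b := le_ciSup (Set.finite_range s).bddAbove
  have hb : 0 ≤ b := Real.iSup_nonneg hs
  rcases (sum_nonneg fun j _ => sq_nonneg (s j)).eq_or_lt with hv | hv
  · have hs₀ : ∀ j, s j = 0 := fun j => by
      simpa using (sum_eq_zero_iff_of_nonneg fun j _ => sq_nonneg (s j)).mp hv.symm j (mem_univ j)
    have hempty : {ω | (∑ j, s j) + 2 * √(t * ∑ j, s j ^ 2) + 2 * t * b
        < ∑ j, s j * ξ j ω ^ 2} = ∅ := by
      ext ω
      simp [hs₀, ht, hb, mul_nonneg]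
    simp [hempty]
  · obtain ⟨θ, hθ, hθb, hexp⟩ := exists_chernoff_parameter ht hv hb
    calc μ {ω | _ < ∑ j, s j * ξ j ω ^ 2}
        ≤ μ {ω | (∑ j, s j) + 2 * √(t * ∑ j, s j ^ 2) + 2 * t * b ≤ ∑ j, s j * ξ j ω ^ 2} :=
          measure_mono (Set.ofPred_subset_ofPred.mpr fun _ => le_of_lt)
      _ = ENNReal.ofReal (μ.real _) := (ofReal_measureReal (measure_ne_top _ _)).symm
      _ ≤ ENNReal.ofReal (exp (-t)) := by
          refine ENNReal.ofReal_le_ofReal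
            ((measureReal_sum_mul_sq_ge_le hmeas hgauss hindep hs hsb hθ hθb _).trans_eq ?_)
          rw [← hexp]
          congr 1
          ring

/-- Diagonal case of the Gaussian quadratic-form concentration inequality:
for i.i.d. standard Gaussians `ξ_j` and nonnegative weights `s_j = σ_j²`,
`P(Σ s_j ξ_j² > Σ s_j + 2√(t Σ s_j²) + 2 t max_j s_j) ≤ e^{-t}`. -/
theorem stmt_6 {Ω : Type*} [MeasurableSpace Ω] (μ : Measure Ω) [IsProbabilityMeasure μ]
    (l : ℕ) (hl : 0 < l) (ξ : Fin l → Ω → ℝ)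
    (hmeas : ∀ j, Measurable (ξ j))
    (hgauss : ∀ j, Measure.map (ξ j) μ = gaussianReal 0 1)
    (hindep : iIndepFun ξ μ)
    (s : Fin l → ℝ) (hs : ∀ j, 0 ≤ s j) (t : ℝ) (ht : 0 ≤ t) :
    μ {ω | (∑ j, s j) + 2 * Real.sqrt (t * ∑ j, (s j) ^ 2) + 2 * t * (⨆ j, s j)
        < ∑ j, s j * (ξ j ω) ^ 2}
      ≤ ENNReal.ofReal (Real.exp (-t)) :=
  stmt_6_general μ l ξ hmeas hgauss hindep s hs t ht
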